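/- Let G be a finite group of order n such that every nontrivial complex representation of G has dimension at least k, let m ≥ 2, and for every pair 1 ≤ i < j ≤ m let A_{ij} be a subset of G of size p·n. Then, provided that p^{2m−3} ≥ 2^{3m}/k, there exist elements x₁, …, x_m of G such that x_i·x_j⁻¹ ∈ A_{ij} for every pair i < j. -/

import Mathlib

/-!
If every nontrivial representation of `G` has dimension at least `k`, then an eigenvector of a
positive semidefinite matrix commuting with right translations is either constant or lies in an
eigenspace carrying a nontrivial representation of `G`; in the second case its eigenvalue has
multiplicity at least `k`, hence is at most `trace / k`. Applied to the Gram matrix of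
`v ↦ (y ↦ ∑ x ∈ C, v (x * y⁻¹))` and to the centred indicator of `D`, this gives the mixing bound
`∑ y, (|C ∩ D y| - |C| |D| / n) ^ 2 ≤ n |C| |D| / k`. So if `|C| ≥ c n` and `|D| = p n`, fewer
than `4 n / (k p c)` elements `y` have `|C ∩ D y| ≤ p |C| / 2`.

The `x_i` are chosen from the last one backwards, each `x_i` from a candidate set `C_i`, which is
`G` to begin with: `x_m ∈ C_m` avoids these exceptional sets for all pairs `(C_i, A_{im})`, and
then the new candidate sets `{x ∈ C_i | x * x_m⁻¹ ∈ A_{im}}` for the earlier coordinates have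
density at least `p c / 2`, so the argument can be repeated. The hypothesis on `p` makes the
exceptional sets smaller than the candidate set at every step.
-/

open Matrix Finset Module Representation
open scoped ComplexOrder InnerProductSpace

namespace Matrix

variable {𝕜 : Type*} [RCLike 𝕜] {n : Type*} [Fintype n] [DecidableEq n] {A : Matrix n n 𝕜}

theorem IsHermitian.finrank_eigenspace_le_card (hA : A.IsHermitian) (μ : 𝕜) :
    finrank 𝕜 (End.eigenspace A.mulVecLin μ) ≤ #{i | (hA.eigenvalues i : 𝕜) = μ} := by
  classical
  calc finrank 𝕜 (End.eigenspace A.mulVecLin μ) ≤ A.charpoly.rootMultiplicity μ := by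
        simpa [charpoly_mulVecLin] using LinearMap.finrank_eigenspace_le A.mulVecLin μ
    _ = #{i | (hA.eigenvalues i : 𝕜) = μ} := by
        rw [← Polynomial.count_roots, hA.roots_charpoly_eq_eigenvalues, Multiset.count_map]
        simp [Finset.card, eq_comm]

theorem PosSemidef.mul_le_re_trace_of_le_finrank (hA : A.PosSemidef) {μ : ℝ} {k : ℕ}
    (hk : k ≤ finrank 𝕜 (End.eigenspace A.mulVecLin μ)) : k * μ ≤ RCLike.re A.trace := by
  rcases lt_or_ge μ 0 with hμ | hμ
  · have := (RCLike.nonneg_iff.1 hA.trace_nonneg).1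
    nlinarith [show (0 : ℝ) ≤ k from by positivity]
  calc k * μ ≤ #{i | hA.isHermitian.eigenvalues i = μ} * μ := by
        gcongr
        exact_mod_cast (hk.trans (hA.isHermitian.finrank_eigenspace_le_card μ)).trans_eq (by simp)
    _ = ∑ i with hA.isHermitian.eigenvalues i = μ, hA.isHermitian.eigenvalues i := by
        rw [Finset.sum_congr rfl fun i hi => (Finset.mem_filter.1 hi).2]; simp [mul_comm]
    _ ≤ ∑ i, hA.isHermitian.eigenvalues i :=
        Finset.sum_le_sum_of_subset_of_nonneg (Finset.filter_subset _ _)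
          fun i _ _ => hA.eigenvalues_nonneg i
    _ = RCLike.re A.trace := by simp [hA.isHermitian.trace_eq_sum_eigenvalues]

theorem IsHermitian.re_dotProduct_mulVec_le (hA : A.IsHermitian) {c : ℝ} (v : n → 𝕜)
    (h : ∀ j, hA.eigenvalues j ≤ c ∨ star ⇑(hA.eigenvectorBasis j) ⬝ᵥ v = 0) :
    RCLike.re (star v ⬝ᵥ (A *ᵥ v)) ≤ c * RCLike.re (star v ⬝ᵥ v) := by
  set b := hA.eigenvectorBasis
  set w : n → 𝕜 := fun j => star ⇑(b j) ⬝ᵥ v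
  have hinner (x y : n → 𝕜) : star x ⬝ᵥ y = ⟪WithLp.toLp 2 x, WithLp.toLp 2 y⟫_𝕜 := by
    rw [EuclideanSpace.inner_toLp_toLp, dotProduct_comm]
  have hw (j : n) : ⟪b j, WithLp.toLp 2 v⟫_𝕜 = w j := (hinner _ _).symm
  have hcoord (j : n) : ⟪b j, WithLp.toLp 2 (A *ᵥ v)⟫_𝕜 = hA.eigenvalues j * w j := by
    have hstar : star ⇑(b j) ᵥ* A = star (A *ᵥ ⇑(b j)) := by
      conv_lhs => rw [← hA.eq]
      exact (star_mulVec _ _).symm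
    rw [← hinner, dotProduct_mulVec, hstar, hA.mulVec_eigenvectorBasis,
      star_smul, smul_dotProduct, RCLike.real_smul_eq_coe_mul, star_trivial]
  have hform : star v ⬝ᵥ (A *ᵥ v) = ∑ j, (hA.eigenvalues j : 𝕜) * (star (w j) * w j) := by
    rw [hinner, ← b.sum_inner_mul_inner]
    refine Finset.sum_congr rfl fun j _ => ?_
    rw [hcoord, ← inner_conj_symm, hw]
    simp only [RCLike.star_def]; ring
  have hnorm : star v ⬝ᵥ v = ∑ j, star (w j) * w j := by
    rw [hinner, ← b.sum_inner_mul_inner]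
    refine Finset.sum_congr rfl fun j _ => ?_
    rw [← inner_conj_symm, hw, RCLike.star_def]
  rw [hform, hnorm, map_sum, map_sum, Finset.mul_sum]
  refine Finset.sum_le_sum fun j _ => ?_
  rw [RCLike.star_def, RCLike.conj_mul, ← RCLike.ofReal_pow, ← RCLike.ofReal_mul,
    RCLike.ofReal_re, RCLike.ofReal_re]
  rcases h j with hj | hj
  · gcongr
  · simp [w, hj]

end Matrix

theorem re_star_dotProduct_self_ofReal {n : Type*} [Fintype n] (r : n → ℝ) :
    RCLike.re (star (fun i => (r i : ℂ)) ⬝ᵥ fun i => (r i : ℂ)) = ∑ i, r i ^ 2 := by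
  simp [dotProduct, sq]

theorem Fin.forall_lt_snoc {α : Type*} {t : ℕ} (P : Fin (t + 1) → Fin (t + 1) → α → α → Prop)
    {y : Fin t → α} {a : α} (hcast : ∀ i j : Fin t, i < j → P i.castSucc j.castSucc (y i) (y j))
    (hlast : ∀ i : Fin t, P i.castSucc (Fin.last t) (y i) a) :
    ∀ i j : Fin (t + 1), i < j →
      P i j (Fin.snoc (α := fun _ => α) y a i) (Fin.snoc (α := fun _ => α) y a j) := by
  intro i j hij
  induction j using Fin.lastCases with
  | last =>
    induction i using Fin.lastCases with
    | last => exact absurd hij (lt_irrefl _)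
    | cast i => simpa using hlast i
  | cast j =>
    induction i using Fin.lastCases with
    | last => exact absurd hij (not_lt.2 (Fin.le_last _))
    | cast i => simpa using hcast i j (Fin.castSucc_lt_castSucc_iff.1 hij)

section DensityBound

variable {t k : ℕ} {p c : ℝ}

theorem four_mul_succ_lt (hp0 : 0 < p) (hp1 : p ≤ 1)
    (h : ((t + 1 : ℕ) : ℝ) * 4 ^ (t + 1) * p < k * p ^ (2 * (t + 1)) * c ^ 2) :
    4 * ((t + 1 : ℕ) : ℝ) < k * p * c ^ 2 := by
  have h4 : (4 : ℝ) ≤ 4 ^ (t + 1) := le_self_pow₀ (by norm_num) (by omega)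
  have hp2 : p ^ (2 * (t + 1)) ≤ p ^ 2 := pow_le_pow_of_le_one hp0.le hp1 (by omega)
  have h1 : ((t + 1 : ℕ) : ℝ) * 4 ^ (t + 1) * p < k * p * c ^ 2 * p :=
    calc _ < k * p ^ (2 * (t + 1)) * c ^ 2 := h
      _ ≤ k * p ^ 2 * c ^ 2 := by gcongr
      _ = k * p * c ^ 2 * p := by ring
  calc 4 * ((t + 1 : ℕ) : ℝ) ≤ ((t + 1 : ℕ) : ℝ) * 4 ^ (t + 1) := by
        rw [mul_comm]; gcongr
    _ < k * p * c ^ 2 := lt_of_mul_lt_mul_right h1 hp0.le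

theorem mul_four_pow_lt_of_succ (hp0 : 0 ≤ p)
    (h : ((t + 1 : ℕ) : ℝ) * 4 ^ (t + 1) * p < k * p ^ (2 * (t + 1)) * c ^ 2) :
    t * 4 ^ t * p < k * p ^ (2 * t) * (p * c / 2) ^ 2 := by
  calc (t : ℝ) * 4 ^ t * p = t * 4 ^ (t + 1) * p / 4 := by ring
    _ ≤ ((t + 1 : ℕ) : ℝ) * 4 ^ (t + 1) * p / 4 := by push_cast; gcongr; linarith
    _ < k * p ^ (2 * (t + 1)) * c ^ 2 / 4 := by gcongr
    _ = k * p ^ (2 * t) * (p * c / 2) ^ 2 := by ring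

end DensityBound

namespace Representation

variable (R G : Type*) [CommSemiring R] [Monoid G]

def rightRegular : Representation R G (G → R) where
  toFun g := LinearMap.funLeft R R (· * g)
  map_one' := by ext; simp
  map_mul' g h := by ext; simp [mul_assoc]

variable {R G}

@[simp]
theorem rightRegular_apply (g : G) (v : G → R) (x : G) : rightRegular R G g v x = v (x * g) :=
  rfl

theorem apply_eq_apply_one_of_forall_rightRegular_eq {v : G → R}
    (h : ∀ g, rightRegular R G g v = v) (x : G) : v x = v 1 := by
  simpa using congrFun (h x) 1

end Representation

section Group

variable {G : Type*} [Group G]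

theorem Matrix.commute_mulVecLin_rightRegular {R : Type*} [CommSemiring R] [Fintype G]
    {M : Matrix G G R} (hM : ∀ g y z, M (y * g) (z * g) = M y z) (g : G) :
    Commute M.mulVecLin (rightRegular R G g) := by
  ext v y
  simp only [Module.End.mul_apply, mulVecLin_apply, rightRegular_apply, mulVec, dotProduct]
  exact Fintype.sum_equiv (Equiv.mulRight g) _ _ fun z => by simp [hM]

variable [Fintype G] [DecidableEq G] (R : Type*)

def translateMatrix [Zero R] [One R] (C : Finset G) : Matrix G G R :=
  Matrix.of fun y z => if z * y ∈ C then 1 else 0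

variable {R}

theorem translateMatrix_mulVec [NonAssocSemiring R] (C : Finset G) (v : G → R) (y : G) :
    (translateMatrix R C *ᵥ v) y = ∑ x ∈ C, v (x * y⁻¹) := by
  simp only [translateMatrix, mulVec, dotProduct, of_apply, ite_mul, one_mul, zero_mul]
  rw [← Finset.sum_filter, Finset.sum_nbij' (· * y) (· * y⁻¹)] <;> simp

variable [CommSemiring R] [StarRing R]

theorem conjTranspose_translateMatrix_mul_self_apply (C : Finset G) (y z : G) :
    ((translateMatrix R C)ᴴ * translateMatrix R C) y z =
      ∑ x, if y * x ∈ C ∧ z * x ∈ C then 1 else 0 := by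
  simp only [translateMatrix, Matrix.mul_apply, conjTranspose_apply, of_apply]
  refine Finset.sum_congr rfl fun x _ => ?_
  split_ifs <;> simp_all

theorem conjTranspose_translateMatrix_mul_self_mul_right (C : Finset G) (g y z : G) :
    ((translateMatrix R C)ᴴ * translateMatrix R C) (y * g) (z * g) =
      ((translateMatrix R C)ᴴ * translateMatrix R C) y z := by
  simp only [conjTranspose_translateMatrix_mul_self_apply, mul_assoc]
  exact Equiv.sum_comp (Equiv.mulLeft g) fun x => if y * x ∈ C ∧ z * x ∈ C then (1 : R) else 0

theorem trace_conjTranspose_translateMatrix_mul_self (C : Finset G) :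
    ((translateMatrix R C)ᴴ * translateMatrix R C).trace = Fintype.card G * #C := by
  have (y : G) : (∑ x, if y * x ∈ C then 1 else 0 : R) = #C :=
    (Equiv.sum_comp (Equiv.mulLeft y) fun x => if x ∈ C then (1 : R) else 0).trans (by simp)
  simp [trace, conjTranspose_translateMatrix_mul_self_apply, this]

end Group

def IsQuasirandom (G : Type*) [Group G] (k : ℕ) : Prop :=
  ∀ (d : ℕ) (ρ : G →* GL (Fin d) ℂ), (∃ g, ρ g ≠ 1) → k ≤ d

namespace IsQuasirandom

variable {G : Type*} [Group G] {k : ℕ}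

theorem le_finrank (hG : IsQuasirandom G k) {V : Type*} [AddCommGroup V] [Module ℂ V]
    [FiniteDimensional ℂ V] (ρ : Representation ℂ G V) (h : ∃ g v, ρ g v ≠ v) :
    k ≤ finrank ℂ V := by
  let e := LinearMap.toMatrixAlgEquiv (Module.finBasis ℂ V)
  refine hG _ ((Units.map e.toMonoidHom).comp ρ.asGroupHom) ?_
  obtain ⟨g, v, hv⟩ := h
  refine ⟨g, fun hg => hv ?_⟩
  have : e (ρ g) = e 1 := by
    rw [map_one]; exact congrArg Units.val hg
  simp [e.injective this]

variable [Fintype G] [DecidableEq G]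

theorem mul_le_re_trace (hG : IsQuasirandom G k) {M : Matrix G G ℂ} (hM : M.PosSemidef)
    (hinv : ∀ g y z, M (y * g) (z * g) = M y z) {μ : ℝ} {v : G → ℂ}
    (hv : M *ᵥ v = (μ : ℂ) • v) (hnc : ∃ g, rightRegular ℂ G g v ≠ v) :
    k * μ ≤ RCLike.re M.trace := by
  set E := End.eigenspace M.mulVecLin μ
  have hE (g : G) : E ≤ E.comap (rightRegular ℂ G g) :=
    End.mapsTo_genEigenspace_of_comm (commute_mulVecLin_rightRegular hinv g) μ 1
  have hvE : v ∈ E := End.mem_eigenspace_iff.2 hv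
  refine hM.mul_le_re_trace_of_le_finrank
    (hG.le_finrank ((rightRegular ℂ G).subrepresentation E hE) ?_)
  obtain ⟨g, hg⟩ := hnc
  exact ⟨g, ⟨v, hvE⟩, fun h => hg (congrArg Subtype.val h)⟩

theorem re_dotProduct_mulVec_le (hG : IsQuasirandom G k) (hk : 0 < k) {M : Matrix G G ℂ}
    (hM : M.PosSemidef) (hinv : ∀ g y z, M (y * g) (z * g) = M y z) {f : G → ℂ}
    (hf : ∑ x, f x = 0) :
    RCLike.re (star f ⬝ᵥ (M *ᵥ f)) ≤ RCLike.re M.trace / k * RCLike.re (star f ⬝ᵥ f) := by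
  refine hM.isHermitian.re_dotProduct_mulVec_le f fun j => ?_
  set u : G → ℂ := ⇑(hM.isHermitian.eigenvectorBasis j)
  by_cases hfix : ∀ g, rightRegular ℂ G g u = u
  · right
    simp only [dotProduct, Pi.star_apply, apply_eq_apply_one_of_forall_rightRegular_eq hfix,
      ← Finset.mul_sum, hf, mul_zero]
  · left
    have hu : M *ᵥ u = (hM.isHermitian.eigenvalues j : ℂ) • u := by
      rw [hM.isHermitian.mulVec_eigenvectorBasis, RCLike.real_smul_eq_coe_smul (K := ℂ)]; rfl
    rw [le_div_iff₀ (by exact_mod_cast hk), mul_comm]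
    exact hG.mul_le_re_trace hM hinv hu (not_forall.1 hfix)

theorem sum_sq_card_filter_sub_le (hG : IsQuasirandom G k) (hk : 0 < k) (C D : Finset G) :
    ∑ y, ((#{x ∈ C | x * y⁻¹ ∈ D} : ℝ) - #C * #D / Fintype.card G) ^ 2 ≤
      Fintype.card G * #C * #D / k := by
  set n : ℝ := (Fintype.card G : ℝ)
  set T := translateMatrix ℂ C
  set u : G → ℝ := fun z => (if z ∈ D then 1 else 0) - #D / n
  have hu : ∑ z, u z = 0 := by
    simp [u, Finset.sum_sub_distrib, n]
    field_simp
    simp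
  have hTu (y : G) : (T *ᵥ fun z => (u z : ℂ)) y =
      (((#{x ∈ C | x * y⁻¹ ∈ D} : ℝ) - #C * #D / n : ℝ) : ℂ) := by
    rw [translateMatrix_mulVec, ← Complex.ofReal_sum]
    congr 1
    simp [u, Finset.sum_sub_distrib, Finset.sum_boole]
    ring
  have huu : ∑ z, u z ^ 2 ≤ #D := by
    have hsq (z : G) : u z ^ 2 = u z * (if z ∈ D then 1 else 0) - #D / n * u z := by
      simp only [u]; ring
    have hD : (0 : ℝ) ≤ #D / n := by positivity
    simp only [hsq, Finset.sum_sub_distrib, ← Finset.mul_sum, hu, mul_zero, sub_zero, mul_ite,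
      mul_one, mul_zero, Finset.sum_ite_mem, Finset.univ_inter, u]
    simp only [Finset.inter_self, Finset.sum_const, nsmul_eq_mul, mul_one]
    nlinarith
  have key := hG.re_dotProduct_mulVec_le hk (posSemidef_conjTranspose_mul_self T)
    (conjTranspose_translateMatrix_mul_self_mul_right C) (f := fun z => (u z : ℂ))
    (by simpa using congrArg (fun r : ℝ => (r : ℂ)) hu)
  rw [← mulVec_mulVec, dotProduct_mulVec, ← star_mulVec, funext hTu,
    re_star_dotProduct_self_ofReal, re_star_dotProduct_self_ofReal,
    trace_conjTranspose_translateMatrix_mul_self] at key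
  calc _ ≤ n * #C / k * ∑ z, u z ^ 2 := by simpa [n] using key
    _ ≤ n * #C / k * #D := by gcongr
    _ = n * #C * #D / k := by ring

theorem card_filter_le_half_mul_le (hG : IsQuasirandom G k) (hk : 0 < k) (C D : Finset G) :
    (#{y | (#{x ∈ C | x * y⁻¹ ∈ D} : ℝ) ≤ #C * #D / (2 * Fintype.card G)} : ℝ) *
      (k * (#C * #D)) ≤ 4 * Fintype.card G ^ 3 := by
  set n : ℝ := (Fintype.card G : ℝ)
  have hn : 0 < n := by simp [n, Fintype.card_pos]
  set β : ℝ := #C * #D / n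
  set bad := ({y | (#{x ∈ C | x * y⁻¹ ∈ D} : ℝ) ≤ #C * #D / (2 * n)} : Finset G)
  have hbad : (#bad : ℝ) * (β / 2) ^ 2 ≤ n * #C * #D / k := by
    calc (#bad : ℝ) * (β / 2) ^ 2 ≤ ∑ y ∈ bad, ((#{x ∈ C | x * y⁻¹ ∈ D} : ℝ) - β) ^ 2 := by
          rw [← nsmul_eq_mul]
          refine Finset.card_nsmul_le_sum _ _ _ fun y hy => ?_
          have hy : (#{x ∈ C | x * y⁻¹ ∈ D} : ℝ) ≤ β / 2 := by
            simpa [bad, β, div_div, mul_comm] using hy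
          nlinarith
      _ ≤ ∑ y, ((#{x ∈ C | x * y⁻¹ ∈ D} : ℝ) - β) ^ 2 :=
          Finset.sum_le_sum_of_subset_of_nonneg (Finset.subset_univ _) fun _ _ _ => sq_nonneg _
      _ ≤ n * #C * #D / k := hG.sum_sq_card_filter_sub_le hk C D
  have hk' : (0 : ℝ) < k := by exact_mod_cast hk
  rcases (by positivity : (0 : ℝ) ≤ #C * #D).eq_or_lt with hP | hP
  · rw [← hP, mul_zero, mul_zero]; positivity
  refine le_of_mul_le_mul_right ?_ hP
  simp only [β, div_pow, le_div_iff₀ hk'] at hbad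
  field_simp at hbad
  nlinarith

theorem exists_mem_forall_le_card_filter (hG : IsQuasirandom G k) (hk : 0 < k) {ι : Type*}
    [Fintype ι] {p c : ℝ} (hp : 0 < p) (hc : 0 < c) (C D : ι → Finset G) {E : Finset G}
    (hC : ∀ i, c * Fintype.card G ≤ #(C i)) (hD : ∀ i, #(D i) = p * Fintype.card G)
    (hE : c * Fintype.card G ≤ #E) (h : 4 * Fintype.card ι < k * p * c ^ 2) :
    ∃ y ∈ E, ∀ i, p * c / 2 * Fintype.card G ≤ #{x ∈ C i | x * y⁻¹ ∈ D i} := by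
  set n : ℝ := (Fintype.card G : ℝ)
  have hn : 0 < n := by simp [n, Fintype.card_pos]
  have hkpc : 0 < k * p * c := by positivity
  set bad : ι → Finset G := fun i =>
    {y | (#{x ∈ C i | x * y⁻¹ ∈ D i} : ℝ) ≤ #(C i) * #(D i) / (2 * n)}
  have hbad (i : ι) : #(bad i) * (k * p * c) ≤ 4 * n := by
    have h1 := hG.card_filter_le_half_mul_le hk (C i) (D i)
    have h2 : c * n * (p * n) ≤ #(C i) * #(D i) := by rw [hD]; gcongr; exact hC i
    refine le_of_mul_le_mul_right ?_ (by positivity : 0 < n ^ 2)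
    calc #(bad i) * (k * p * c) * n ^ 2 = #(bad i) * (k * (c * n * (p * n))) := by ring
      _ ≤ #(bad i) * (k * (#(C i) * #(D i))) := by gcongr
      _ ≤ 4 * n ^ 3 := h1
      _ = 4 * n * n ^ 2 := by ring
  have hunion : #(Finset.univ.biUnion bad) < #E := by
    have h1 : (#(Finset.univ.biUnion bad) : ℝ) ≤ ∑ i, (#(bad i) : ℝ) := by
      exact_mod_cast Finset.card_biUnion_le
    suffices (#(Finset.univ.biUnion bad) : ℝ) * (k * p * c) < #E * (k * p * c) by
      exact_mod_cast lt_of_mul_lt_mul_right this hkpc.le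
    calc (#(Finset.univ.biUnion bad) : ℝ) * (k * p * c) ≤ ∑ i, #(bad i) * (k * p * c) := by
          rw [← Finset.sum_mul]; gcongr
      _ ≤ ∑ _i : ι, 4 * n := Finset.sum_le_sum fun i _ => hbad i
      _ = 4 * Fintype.card ι * n := by simp; ring
      _ < k * p * c ^ 2 * n := by gcongr
      _ = c * n * (k * p * c) := by ring
      _ ≤ #E * (k * p * c) := by gcongr
  obtain ⟨y, hyE, hy⟩ := Finset.exists_mem_notMem_of_card_lt_card hunion
  refine ⟨y, hyE, fun i => ?_⟩
  have hi : y ∉ bad i := fun hi => hy (Finset.mem_biUnion.2 ⟨i, Finset.mem_univ i, hi⟩)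
  simp only [bad, Finset.mem_filter, Finset.mem_univ, true_and, not_le, hD] at hi
  calc p * c / 2 * n = p * (c * n) / 2 := by ring
    _ ≤ p * #(C i) / 2 := by gcongr; exact hC i
    _ = #(C i) * (p * n) / (2 * n) := by field_simp
    _ ≤ _ := hi.le

theorem exists_forall_mem_forall_mul_inv_mem (hG : IsQuasirandom G k) (hk : 0 < k) {p : ℝ}
    (hp0 : 0 < p) (hp1 : p ≤ 1) (t : ℕ) {c : ℝ} (hc : 0 < c) (C : Fin (t + 1) → Finset G)
    (A : Fin (t + 1) → Fin (t + 1) → Finset G)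
    (hC : ∀ i, c * Fintype.card G ≤ #(C i)) (hA : ∀ i j, i < j → #(A i j) = p * Fintype.card G)
    (h : t * 4 ^ t * p < k * p ^ (2 * t) * c ^ 2) :
    ∃ y : Fin (t + 1) → G, (∀ i, y i ∈ C i) ∧ ∀ i j, i < j → y i * (y j)⁻¹ ∈ A i j := by
  induction t generalizing c with
  | zero =>
    obtain ⟨y, hy⟩ : (C 0).Nonempty := by
      rw [← Finset.card_pos, ← Nat.cast_pos (α := ℝ)]
      exact lt_of_lt_of_le (by positivity) (hC 0)
    refine ⟨fun _ => y, fun i => Fin.eq_zero i ▸ hy, fun i j hij => ?_⟩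
    exact absurd hij (by rw [Fin.eq_zero i, Fin.eq_zero j]; exact lt_irrefl 0)
  | succ t ih =>
    have hlast : 4 * Fintype.card (Fin (t + 1)) < k * p * c ^ 2 := by
      simpa using four_mul_succ_lt hp0 hp1 h
    obtain ⟨z, hzC, hz⟩ := hG.exists_mem_forall_le_card_filter hk hp0 hc
      (fun i => C i.castSucc) (fun i => A i.castSucc (Fin.last _)) (fun i => hC _)
      (fun i => hA _ _ (Fin.castSucc_lt_last i)) (hC (Fin.last _)) hlast
    obtain ⟨y, hyC, hyA⟩ := ih (c := p * c / 2) (by positivity)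
      (fun i => {x ∈ C i.castSucc | x * z⁻¹ ∈ A i.castSucc (Fin.last _)})
      (fun i j => A i.castSucc j.castSucc) hz
      (fun i j hij => hA _ _ (Fin.castSucc_lt_castSucc_iff.2 hij))
      (mul_four_pow_lt_of_succ hp0.le h)
    refine ⟨Fin.snoc y z, fun i => ?_, Fin.forall_lt_snoc (fun i j a b => a * b⁻¹ ∈ A i j)
      hyA fun i => (Finset.mem_filter.1 (hyC i)).2⟩
    induction i using Fin.lastCases with
    | last => simpa using hzC
    | cast i => simpa using (Finset.mem_filter.1 (hyC i)).1

end IsQuasirandom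

/-- Theorem 5.6 (Gowers, Quasirandom Groups): if every nontrivial complex
representation of a finite group `G` of order `n` has dimension at least `k`,
`m ≥ 2`, each `A_{ij} ⊆ G` (for `i < j`) has density `p`, and
`p^{2m−3} ≥ 2^{3m}/k`, then there exist `x₁, …, x_m ∈ G` with `xᵢxⱼ⁻¹ ∈ A_{ij}`
for every `i < j`. -/
theorem simultaneous_pair_quotients
    (G : Type) [Group G] [Fintype G] (k : ℕ) (hk0 : 0 < k)
    (hrep : ∀ (d : ℕ) (ρ : G →* Matrix.GeneralLinearGroup (Fin d) ℂ),
      (∃ g, ρ g ≠ 1) → k ≤ d)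
    (m : ℕ) (hm : 2 ≤ m) (A : Fin m → Fin m → Finset G) (p : ℝ)
    (hA : ∀ i j : Fin m, i < j → ((A i j).card : ℝ) = p * Fintype.card G)
    (hp : (2 : ℝ) ^ (3 * m) / (k : ℝ) ≤ p ^ (2 * m - 3)) :
    ∃ x : Fin m → G, ∀ i j : Fin m, i < j → x i * (x j)⁻¹ ∈ A i j := by
  classical
  obtain ⟨t, rfl⟩ : ∃ t, m = t + 1 := ⟨m - 1, by omega⟩
  have hn : (0 : ℝ) < Fintype.card G := by exact_mod_cast Fintype.card_pos
  have hA01 := hA ⟨0, by omega⟩ ⟨1, by omega⟩ (by simp [Fin.lt_def])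
  have hp1 : p ≤ 1 := by
    have : (#(A ⟨0, by omega⟩ ⟨1, by omega⟩) : ℝ) ≤ Fintype.card G := by
      exact_mod_cast card_le_univ _
    nlinarith
  have hp0 : 0 < p := by
    refine (nonneg_of_mul_nonneg_left (hA01 ▸ Nat.cast_nonneg _) hn).lt_of_ne' fun h0 => ?_
    rw [h0, zero_pow (by omega)] at hp
    exact (div_pos (by positivity) (by exact_mod_cast hk0)).not_ge hp
  have hcount : t * 4 ^ t < 2 ^ (3 * (t + 1)) :=
    calc t * 4 ^ t < 2 ^ t * 4 ^ t := Nat.mul_lt_mul_of_pos_right t.lt_two_pow_self (by positivity)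
      _ = 2 ^ (3 * t) := by rw [show (4 : ℕ) = 2 ^ 2 by rfl, ← pow_mul, ← pow_add]; ring_nf
      _ ≤ 2 ^ (3 * (t + 1)) := Nat.pow_le_pow_right (by norm_num) (by omega)
  have hdensity : t * 4 ^ t * p < k * p ^ (2 * t) * 1 ^ 2 := by
    rw [div_le_iff₀ (by exact_mod_cast hk0)] at hp
    calc t * 4 ^ t * p < 2 ^ (3 * (t + 1)) * p := by gcongr; exact_mod_cast hcount
      _ ≤ p ^ (2 * (t + 1) - 3) * k * p := by gcongr
      _ = k * p ^ (2 * t) * 1 ^ 2 := by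
        rw [show 2 * t = 2 * (t + 1) - 3 + 1 by omega, pow_succ]; ring
  obtain ⟨x, -, hx⟩ := IsQuasirandom.exists_forall_mem_forall_mul_inv_mem hrep hk0 hp0 hp1 t
    one_pos (fun _ => univ) A (by simp) hA hdensity
  exact ⟨x, hx⟩
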